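/- Let G be a non-elementary hyperbolic group with growth rate λ, Coornaert bounds λ^r ≤ |B(r)| ≤ α·λ^r, and finitely many cone types. Let E be the set of essential elements. Then there exists γ > 0 (depending only on G and A) such that for every essential element g, every r ≥ 0 and every e ≥ 1: |{u ∈ T_g ∩ A(r,e) : gu ∈ E}| ≥ γ·λ^r, where A(r,e) = {u : r−e ≤ |u| ≤ r} is the annulus. -/

import Mathlib

open Filter Set

/-- Word length of `g` with respect to the symmetrized generating set `S ∪ S⁻¹`. -/
noncomputable def wordLength {G : Type*} [Group G] (S : Set G) (g : G) : ℕ :=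
  sInf {n | ∃ l : List G, l.length = n ∧ (∀ x ∈ l, x ∈ S ∪ S⁻¹) ∧ l.prod = g}

/-- The ball of radius `r` in the word metric. -/
noncomputable def wordBall {G : Type*} [Group G] (S : Set G) (r : ℕ) : Set G :=
  {g | wordLength S g ≤ r}

/-- The annulus `A(r,e) = {u : r - e ≤ |u| ≤ r}`. -/
noncomputable def wordAnn {G : Type*} [Group G] (S : Set G) (r e : ℕ) : Set G :=
  {g | r - e ≤ wordLength S g ∧ wordLength S g ≤ r}

/-- The cone type of `g`. -/
noncomputable def coneType {G : Type*} [Group G] (S : Set G) (g : G) : Set G :=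
  {u | wordLength S (g * u) = wordLength S g + wordLength S u}

/-- `g` is essential: its cone type satisfies `|T_g ∩ B(s)| ≥ a·λ^s` for arbitrarily large `s`. -/
def Essential {G : Type*} [Group G] (S : Set G) (lam : ℝ) (g : G) : Prop :=
  ∃ a > (0 : ℝ), ∀ r : ℕ, ∃ s ≥ r, a * lam ^ s ≤ ((coneType S g ∩ wordBall S s).ncard : ℝ)

/-! Splitting a geodesic word in the cone of `g` after `r` letters shows
`|T_g ∩ B(s)| ≤ |B(r)| + ∑ᵥ |T_{gv} ∩ B(s - r)|`, the sum running over the `v ∈ T_g` with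
`|v| = r`. Each summand is at most `α λ^(s-r)`, so when `|T_g ∩ B(s)| ≥ a λ^s` and `s` is large,
at least `(a / 4α) λ^r` of these `v` satisfy `|T_{gv} ∩ B(s - r)| ≥ (a / 4α) λ^(s-r)`.
Finiteness of the set of cone types makes `a` uniform over essential `g`. As there are finitely
many `v`, for all large `s` the `v` so counted are among those counted for infinitely many `s`,
and for these `gv` is essential. -/

open scoped Pointwise Topology

theorem Finset.eventually_filter_subset_filter_frequently {ι α : Type*} (W : Finset ι)
    (l : Filter α) (p : α → ι → Prop) [∀ a, DecidablePred (p a)]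
    [DecidablePred fun i => ∃ᶠ a in l, p a i] :
    ∀ᶠ a in l, W.filter (p a) ⊆ W.filter fun i => ∃ᶠ b in l, p b i := by
  have hp : ∀ i ∈ W, ∀ᶠ a in l, p a i → ∃ᶠ b in l, p b i := fun i _ => by
    by_cases h : ∃ᶠ b in l, p b i
    · exact Eventually.of_forall fun _ _ => h
    · exact (not_frequently.1 h).mono fun _ hn hpi => (hn hpi).elim
  filter_upwards [(eventually_all_finset W).2 hp] with a ha i hi
  obtain ⟨hiW, hpi⟩ := Finset.mem_filter.1 hi
  exact Finset.mem_filter.2 ⟨hiW, ha i hiW hpi⟩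

theorem Finset.sum_le_card_filter_mul_add_card_mul {ι R : Type*} [Semiring R] [LinearOrder R]
    [IsOrderedRing R] (W : Finset ι) (f : ι → R) {M t : R} (hM : ∀ i ∈ W, f i ≤ M) (ht : 0 ≤ t) :
    ∑ i ∈ W, f i ≤ (W.filter fun i => t ≤ f i).card * M + W.card * t := by
  rw [← Finset.sum_filter_add_sum_filter_not W fun i => t ≤ f i]
  refine add_le_add ?_ ?_
  · simpa using Finset.sum_le_card_nsmul _ _ _ fun i hi => hM i (Finset.mem_filter.1 hi).1
  · refine (Finset.sum_le_card_nsmul _ _ t fun i hi =>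
      (not_le.1 (Finset.mem_filter.1 hi).2).le).trans ?_
    rw [nsmul_eq_mul]
    gcongr
    exact Finset.filter_subset _ _

section WordMetric

variable {G : Type*} [Group G] {S : Set G}

theorem exists_list_length_eq_wordLength (hgen : Subgroup.closure S = ⊤) (g : G) :
    ∃ l : List G, l.length = wordLength S g ∧ (∀ x ∈ l, x ∈ S ∪ S⁻¹) ∧ l.prod = g := by
  have hg : g ∈ Submonoid.closure (S ∪ S⁻¹) := by
    rw [← Subgroup.closure_toSubmonoid, hgen]
    exact Subgroup.mem_top g
  obtain ⟨l, hl, hp⟩ := Submonoid.exists_list_of_mem_closure hg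
  exact Nat.sInf_mem (s := {n | ∃ l : List G, l.length = n ∧ (∀ x ∈ l, x ∈ S ∪ S⁻¹) ∧ l.prod = g})
    ⟨l.length, l, rfl, hl, hp⟩

theorem wordLength_le_length {g : G} {l : List G} (hl : ∀ x ∈ l, x ∈ S ∪ S⁻¹) (hp : l.prod = g) :
    wordLength S g ≤ l.length :=
  Nat.sInf_le ⟨l, rfl, hl, hp⟩

theorem wordLength_mul_le (hgen : Subgroup.closure S = ⊤) (g h : G) :
    wordLength S (g * h) ≤ wordLength S g + wordLength S h := by
  obtain ⟨l₁, hlen₁, hm₁, rfl⟩ := exists_list_length_eq_wordLength hgen g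
  obtain ⟨l₂, hlen₂, hm₂, rfl⟩ := exists_list_length_eq_wordLength hgen h
  rw [← hlen₁, ← hlen₂, ← List.length_append, ← List.prod_append]
  exact wordLength_le_length (fun x hx => (List.mem_append.1 hx).elim (hm₁ x) (hm₂ x)) rfl

theorem wordBall_finite (hS : S.Finite) (hgen : Subgroup.closure S = ⊤) (r : ℕ) :
    (wordBall S r).Finite := by
  have := (hS.union hS.inv).to_subtype
  refine ((List.finite_length_le (S ∪ S⁻¹ : Set G) r).image
    fun l => (l.map Subtype.val).prod).subset fun g hg => ?_
  obtain ⟨l, hlen, hm, hp⟩ := exists_list_length_eq_wordLength hgen g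
  lift l to List ↥(S ∪ S⁻¹) using hm
  rw [List.length_map] at hlen
  exact ⟨l, (hlen.trans_le hg : l.length ≤ r), hp⟩

theorem exists_prefix_of_mem_coneType (hgen : Subgroup.closure S = ⊤) {g u : G}
    (hu : u ∈ coneType S g) {r : ℕ} (hr : r ≤ wordLength S u) :
    ∃ v w, v * w = u ∧ wordLength S v = r ∧ v ∈ coneType S g ∧ w ∈ coneType S (g * v) ∧
      wordLength S w = wordLength S u - r := by
  have hgu : wordLength S (g * u) = wordLength S g + wordLength S u := hu
  obtain ⟨l, hlen, hm, hp⟩ := exists_list_length_eq_wordLength hgen u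
  set v := (l.take r).prod
  set w := (l.drop r).prod
  have hvw : v * w = u := by rw [← List.prod_append, List.take_append_drop, hp]
  refine ⟨v, w, hvw, ?_⟩
  have hv : wordLength S v ≤ r :=
    (wordLength_le_length (fun x hx => hm x (List.mem_of_mem_take hx)) rfl).trans
      (List.length_take_le r l)
  have hw : wordLength S w ≤ wordLength S u - r := by
    simpa [hlen] using wordLength_le_length (fun x hx => hm x (List.mem_of_mem_drop hx)) rfl
  have hu' : wordLength S u ≤ wordLength S v + wordLength S w := hvw ▸ wordLength_mul_le hgen v w
  have hgvw : wordLength S (g * v * w) ≤ wordLength S (g * v) + wordLength S w :=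
    wordLength_mul_le hgen _ _
  have hgv := wordLength_mul_le hgen g v
  rw [mul_assoc, hvw, hgu] at hgvw
  simp only [coneType, mem_ofPred_eq, mul_assoc, hvw, hgu]
  omega

theorem ncard_coneType_inter_wordBall_le (hS : S.Finite) (hgen : Subgroup.closure S = ⊤) (g : G)
    {r s : ℕ} (W : Finset G) (hW : ∀ v, wordLength S v = r → v ∈ coneType S g → v ∈ W) :
    (coneType S g ∩ wordBall S s).ncard ≤
      (wordBall S r).ncard + ∑ v ∈ W, (coneType S (g * v) ∩ wordBall S (s - r)).ncard := by
  have hcover : coneType S g ∩ wordBall S s ⊆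
      wordBall S r ∪ ⋃ v ∈ W, v • (coneType S (g * v) ∩ wordBall S (s - r)) := by
    rintro u ⟨hu, hus⟩
    rcases le_total (wordLength S u) r with hur | hru
    · exact Or.inl hur
    obtain ⟨v, w, rfl, hv, hvg, hw, hwl⟩ := exists_prefix_of_mem_coneType hgen hu hru
    refine Or.inr (mem_biUnion (hW v hv hvg) (smul_mem_smul_set ⟨hw, ?_⟩))
    simp only [wordBall, mem_ofPred_eq] at hus ⊢
    omega
  have hfin : (wordBall S r ∪ ⋃ v ∈ W, v • (coneType S (g * v) ∩ wordBall S (s - r))).Finite :=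
    (wordBall_finite hS hgen r).union <| W.finite_toSet.biUnion fun v _ =>
      ((wordBall_finite hS hgen _).subset inter_subset_right).smul_set
  refine (ncard_le_ncard hcover hfin).trans ((ncard_union_le _ _).trans (add_le_add_right ?_ _))
  refine (Finset.set_ncard_biUnion_le _ _).trans_eq ?_
  simp only [ncard_smul_set]

end WordMetric

section Growth

variable {G : Type*} [Group G] {S : Set G} {lam : ℝ}

theorem essential_iff_frequently {g : G} :
    Essential S lam g ↔
      ∃ a > (0 : ℝ), ∃ᶠ s in atTop, a * lam ^ s ≤ ((coneType S g ∩ wordBall S s).ncard : ℝ) := by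
  simp only [frequently_atTop]
  rfl

theorem essential_mul_of_frequently {g v : G} {c : ℝ} (hc : 0 < c) {r : ℕ}
    (h : ∃ᶠ s in atTop,
      c * lam ^ (s - r) ≤ ((coneType S (g * v) ∩ wordBall S (s - r)).ncard : ℝ)) :
    Essential S lam (g * v) :=
  essential_iff_frequently.2 ⟨c, hc, (tendsto_sub_atTop_nat r).frequently h⟩

theorem exists_pos_forall_essential_frequently (hlam : 0 ≤ lam)
    (hfin : (range (coneType S)).Finite) :
    ∃ a > (0 : ℝ), ∀ g : G, Essential S lam g →
      ∃ᶠ s in atTop, a * lam ^ s ≤ ((coneType S g ∩ wordBall S s).ncard : ℝ) := by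
  let P : Set G → ℝ → Prop := fun T a =>
    ∃ᶠ s in atTop, a * lam ^ s ≤ ((T ∩ wordBall S s).ncard : ℝ)
  let E := {T ∈ range (coneType S) | ∃ a > 0, P T a}
  -- A smaller constant still works, so each essential cone type gives a property of `a → 0⁺`.
  have hE : ∀ T ∈ E, ∀ᶠ b in 𝓝[>] 0, P T b := by
    rintro T ⟨-, a, ha, hP⟩
    filter_upwards [Ioo_mem_nhdsGT ha] with b hb
    exact hP.mono fun s hs => le_trans (by gcongr; exact hb.2.le) hs
  obtain ⟨a, ha, haE⟩ :=
    ((eventually_mem_nhdsWithin (s := Ioi 0) (a := (0 : ℝ))).and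
      ((hfin.subset (sep_subset _ _)).eventually_all.2 hE)).exists
  exact ⟨a, ha, fun g hg => haE _ ⟨mem_range_self g, essential_iff_frequently.1 hg⟩⟩

theorem mul_pow_le_card_filter_large_cones (hS : S.Finite) (hgen : Subgroup.closure S = ⊤)
    {α a : ℝ} (hlam : 0 < lam) (hα : 0 < α)
    (hball : ∀ n : ℕ, ((wordBall S n).ncard : ℝ) ≤ α * lam ^ n)
    {g : G} {r s : ℕ} (hrs : r ≤ s) (W : Finset G)
    (hW : ∀ v, v ∈ W ↔ wordLength S v = r ∧ v ∈ coneType S g)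
    (hbig : a * lam ^ s ≤ ((coneType S g ∩ wordBall S s).ncard : ℝ))
    (hgap : 2 * α * lam ^ r ≤ a * lam ^ s) :
    a / (4 * α) * lam ^ r ≤ (W.filter fun v =>
      a / (4 * α) * lam ^ (s - r) ≤ ((coneType S (g * v) ∩ wordBall S (s - r)).ncard : ℝ)).card := by
  set c := a / (4 * α)
  set K := (W.filter fun v =>
      c * lam ^ (s - r) ≤ ((coneType S (g * v) ∩ wordBall S (s - r)).ncard : ℝ)).card
  have ha : 0 < a := pos_of_mul_pos_left ((by positivity : 0 < 2 * α * lam ^ r).trans_le hgap)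
    (by positivity)
  have hcover : ((coneType S g ∩ wordBall S s).ncard : ℝ) ≤ α * lam ^ r +
      ∑ v ∈ W, ((coneType S (g * v) ∩ wordBall S (s - r)).ncard : ℝ) := by
    have := ncard_coneType_inter_wordBall_le hS hgen g (s := s) W fun v hv hvg => (hW v).2 ⟨hv, hvg⟩
    exact_mod_cast (Nat.cast_le.2 this).trans (by push_cast; gcongr; exact hball r)
  have hsplit := Finset.sum_le_card_filter_mul_add_card_mul W
    (fun v => ((coneType S (g * v) ∩ wordBall S (s - r)).ncard : ℝ))
    (M := α * lam ^ (s - r)) (t := c * lam ^ (s - r))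
    (fun v _ => (Nat.cast_le.2 (ncard_le_ncard inter_subset_right
      (wordBall_finite hS hgen _))).trans (hball _)) (by positivity)
  have hWcard : (W.card : ℝ) ≤ α * lam ^ r := by
    refine le_trans ?_ (hball r)
    rw [← ncard_coe_finset]
    exact_mod_cast ncard_le_ncard (fun v hv => ((hW v).1 hv).1.le) (wordBall_finite hS hgen r)
  have hc : α * c = a / 4 := by simp only [c]; field_simp
  have hpow : lam ^ s = lam ^ r * lam ^ (s - r) := by rw [← pow_add, Nat.add_sub_cancel' hrs]
  -- Of `a λ^s`, the elements of length `< r` account for at most `(a/2) λ^s` and the cones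
  -- below the threshold `c λ^(s-r)` for at most `(a/4) λ^s`.
  have hK : a / 4 * lam ^ s ≤ K * (α * lam ^ (s - r)) := by
    have : (W.card : ℝ) * (c * lam ^ (s - r)) ≤ a / 4 * lam ^ s := by
      calc (W.card : ℝ) * (c * lam ^ (s - r)) ≤ α * lam ^ r * (c * lam ^ (s - r)) := by gcongr
        _ = a / 4 * lam ^ s := by rw [hpow, ← hc]; ring
    linarith
  refine le_of_mul_le_mul_right ?_ (by positivity : 0 < α * lam ^ (s - r))
  calc c * lam ^ r * (α * lam ^ (s - r)) = a / 4 * lam ^ s := by rw [hpow, ← hc]; ring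
    _ ≤ _ := hK

end Growth

theorem growth_of_essential_extensions_general {G : Type*} [Group G] (S : Finset G)
    (hgen : Subgroup.closure (S : Set G) = ⊤) (lam α : ℝ) (hlam : 1 < lam) (hα : 1 ≤ α)
    (hcoo₂ : ∀ r : ℕ, ((wordBall (S : Set G) r).ncard : ℝ) ≤ α * lam ^ r)
    (hfin : (Set.range (coneType (S : Set G))).Finite) :
    ∃ γ > (0 : ℝ), ∀ g : G, Essential (S : Set G) lam g → ∀ r e : ℕ, 1 ≤ e →
      γ * lam ^ r ≤
        (({u | u ∈ coneType (S : Set G) g ∩ wordAnn (S : Set G) r e ∧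
            Essential (S : Set G) lam (g * u)}).ncard : ℝ) := by
  classical
  have hlam0 : 0 < lam := by linarith
  have hα0 : 0 < α := by linarith
  obtain ⟨a, ha, hunif⟩ := exists_pos_forall_essential_frequently hlam0.le hfin
  refine ⟨a / (4 * α), by positivity, fun g hg r e _ => ?_⟩
  let good : ℕ → G → Prop := fun s v => a / (4 * α) * lam ^ (s - r) ≤
    ((coneType (S : Set G) (g * v) ∩ wordBall (S : Set G) (s - r)).ncard : ℝ)
  have hball := wordBall_finite S.finite_toSet hgen r
  have hsphere : {v | wordLength (S : Set G) v = r ∧ v ∈ coneType (S : Set G) g}.Finite :=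
    hball.subset fun v hv => hv.1.le
  let W := hsphere.toFinset
  let H := W.filter fun v => ∃ᶠ s in atTop, good s v
  have hH : (H : Set G) ⊆ {u | u ∈ coneType (S : Set G) g ∩ wordAnn (S : Set G) r e ∧
      Essential (S : Set G) lam (g * u)} := fun v hv => by
    obtain ⟨hvW, hfreq⟩ := Finset.mem_filter.1 hv
    obtain ⟨hlen, hcone⟩ := hsphere.mem_toFinset.1 hvW
    exact ⟨⟨hcone, by simp [wordAnn, hlen]⟩, essential_mul_of_frequently (by positivity) hfreq⟩
  have hgap : ∀ᶠ s in atTop, 2 * α * lam ^ r ≤ a * lam ^ s :=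
    ((tendsto_pow_atTop_atTop_of_one_lt hlam).const_mul_atTop ha).eventually_ge_atTop _
  obtain ⟨s, hbig, hrs, hgap, hsub⟩ := ((hunif g hg).and_eventually ((eventually_ge_atTop r).and
    (hgap.and (W.eventually_filter_subset_filter_frequently atTop good)))).exists
  calc a / (4 * α) * lam ^ r ≤ (W.filter (good s)).card :=
        mul_pow_le_card_filter_large_cones S.finite_toSet hgen hlam0 hα0 hcoo₂ hrs W
          (fun v => hsphere.mem_toFinset) hbig hgap
    _ ≤ H.card := by exact_mod_cast Finset.card_le_card hsub
    _ = (H : Set G).ncard := by rw [ncard_coe_finset]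
    _ ≤ _ := by exact_mod_cast ncard_le_ncard hH (hball.subset fun u hu => hu.1.2.2)

/-- There is `γ > 0` such that for every essential `g`, every `r ≥ 0` and every `e ≥ 1`, the
number of `u` in `T_g ∩ A(r,e)` with `gu` essential is at least `γ·λ^r`. -/
theorem growth_of_essential_extensions {G : Type*} [Group G] (S : Finset G)
    (hgen : Subgroup.closure (S : Set G) = ⊤) (lam α : ℝ) (hlam : 1 < lam) (hα : 1 ≤ α)
    (hcoo₁ : ∀ r : ℕ, lam ^ r ≤ ((wordBall (S : Set G) r).ncard : ℝ))
    (hcoo₂ : ∀ r : ℕ, ((wordBall (S : Set G) r).ncard : ℝ) ≤ α * lam ^ r)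
    (hfin : (Set.range (coneType (S : Set G))).Finite) :
    ∃ γ > (0 : ℝ), ∀ g : G, Essential (S : Set G) lam g → ∀ r e : ℕ, 1 ≤ e →
      γ * lam ^ r ≤
        (({u | u ∈ coneType (S : Set G) g ∩ wordAnn (S : Set G) r e ∧
            Essential (S : Set G) lam (g * u)}).ncard : ℝ) :=
  growth_of_essential_extensions_general S hgen lam α hlam hα hcoo₂ hfin
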